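/- Let k, N be integers with 0 ≤ k ≤ N−2 and let τ > 0. Define φ(t) = (1/(k+1))·(1 − (τ/t)^{k+1}) for t > 0, and define the vector field χ_τ(y,z) := (φ(|y|)·y, z) for y ∈ ℝ^{k+1} with y ≠ 0 and z ∈ ℝ^{N−k−1}. Then for every (y,z) with y ≠ 0 and every ξ ∈ ℝ^N one has ⟨dχ_τ(y,z)[ξ], ξ⟩ ≤ max{1 − k·φ(|y|), 1}·|ξ|², where dχ_τ(y,z) is the total derivative of χ_τ at (y,z). -/

import Mathlib

/-!
The map `y ↦ φ(|y|) y` has differential `η ↦ φ(r) η + (φ'(r)/r) ⟨y, η⟩ y` at `|y| = r`, so by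
Cauchy–Schwarz its quadratic form is at most `(φ(r) + r φ'(r)) |η|²` as soon as `φ'(r) ≥ 0`.
For `φ(t) = (1 - (τ/t)^{k+1})/(k+1)` one has `r φ'(r) = (τ/r)^{k+1} = 1 - (k+1) φ(r)`, hence
`φ(r) + r φ'(r) = 1 - k φ(r)`; the identity in the `z`-variables contributes the constant `1`.
-/

open scoped RealInnerProductSpace Topology

section WithLpProd

variable {𝕜 : Type*} [NontriviallyNormedField 𝕜] (p : ENNReal)
  {E F Z W : Type*} [NormedAddCommGroup E] [NormedSpace 𝕜 E] [NormedAddCommGroup F]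
  [NormedSpace 𝕜 F] [NormedAddCommGroup Z] [NormedSpace 𝕜 Z] [NormedAddCommGroup W]
  [NormedSpace 𝕜 W]

def ContinuousLinearMap.withLpProdMap (A : E →L[𝕜] F) (B : Z →L[𝕜] W) :
    WithLp p (E × Z) →L[𝕜] WithLp p (F × W) :=
  (WithLp.prodContinuousLinearEquiv p 𝕜 F W).symm.toContinuousLinearMap ∘L A.prodMap B ∘L
    (WithLp.prodContinuousLinearEquiv p 𝕜 E Z).toContinuousLinearMap

@[simp]
theorem ContinuousLinearMap.withLpProdMap_apply (A : E →L[𝕜] F) (B : Z →L[𝕜] W)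
    (x : WithLp p (E × Z)) :
    A.withLpProdMap p B x = WithLp.toLp p (A x.fst, B x.snd) :=
  rfl

variable {p}

theorem HasFDerivAt.withLpProdMap [Fact (1 ≤ p)] {f : E → F} {g : Z → W} {A : E →L[𝕜] F}
    {B : Z →L[𝕜] W} {x : WithLp p (E × Z)} (hf : HasFDerivAt f A x.fst)
    (hg : HasFDerivAt g B x.snd) :
    HasFDerivAt (fun x : WithLp p (E × Z) => WithLp.toLp p (f x.fst, g x.snd))
      (A.withLpProdMap p B) x := by
  set e := WithLp.prodContinuousLinearEquiv p 𝕜 E Z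
  set e' := WithLp.prodContinuousLinearEquiv p 𝕜 F W
  exact e'.symm.hasFDerivAt.comp x ((hf.prodMap (e x) hg).comp x e.hasFDerivAt)

end WithLpProd

section InnerProductSpace

variable {E Z : Type*} [NormedAddCommGroup E] [InnerProductSpace ℝ E] [NormedAddCommGroup Z]
  [InnerProductSpace ℝ Z]

theorem inner_withLpProdMap_self_le {A : E →L[ℝ] E} {B : Z →L[ℝ] Z} {a b : ℝ}
    (hA : ∀ η, ⟪A η, η⟫ ≤ a * ‖η‖ ^ 2) (hB : ∀ ζ, ⟪B ζ, ζ⟫ ≤ b * ‖ζ‖ ^ 2)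
    (ξ : WithLp 2 (E × Z)) :
    ⟪A.withLpProdMap 2 B ξ, ξ⟫ ≤ max a b * ‖ξ‖ ^ 2 := by
  rw [WithLp.prod_inner_apply, WithLp.prod_norm_sq_eq_of_L2, mul_add]
  simp only [ContinuousLinearMap.withLpProdMap_apply]
  gcongr
  · exact (hA _).trans (by gcongr; exact le_max_left a b)
  · exact (hB _).trans (by gcongr; exact le_max_right a b)

theorem hasFDerivAt_norm_of_ne_zero {x : E} (hx : x ≠ 0) :
    HasFDerivAt (‖·‖) (‖x‖⁻¹ • innerSL ℝ x) x := by
  have h := (hasStrictFDerivAt_norm_sq x).hasFDerivAt.sqrt (by positivity)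
  simp only [Real.sqrt_sq (norm_nonneg _)] at h
  convert h using 1
  ext v
  simp only [smul_apply, innerSL_apply_apply, smul_eq_mul, nsmul_eq_mul, Nat.cast_ofNat]
  field_simp

theorem hasFDerivAt_comp_norm_smul {f : ℝ → ℝ} {f' : ℝ} {y : E} (hy : y ≠ 0)
    (hf : HasDerivAt f f' ‖y‖) :
    HasFDerivAt (fun w : E => f ‖w‖ • w)
      (f ‖y‖ • ContinuousLinearMap.id ℝ E + ((f' / ‖y‖) • innerSL ℝ y).smulRight y) y := by
  have h := (hf.comp_hasFDerivAt y (hasFDerivAt_norm_of_ne_zero hy)).smul (hasFDerivAt_id y)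
  rwa [smul_smul, ← div_eq_mul_inv] at h

theorem inner_smul_id_add_rankOne_apply_self_le {a b : ℝ} (hb : 0 ≤ b) (y η : E) :
    ⟪(a • ContinuousLinearMap.id ℝ E + ((b / ‖y‖) • innerSL ℝ y).smulRight y) η, η⟫ ≤
      (a + ‖y‖ * b) * ‖η‖ ^ 2 := by
  simp only [add_apply, smul_apply, ContinuousLinearMap.id_apply,
    ContinuousLinearMap.smulRight_apply, innerSL_apply_apply, inner_add_left,
    real_inner_smul_left, smul_eq_mul, real_inner_self_eq_norm_sq]
  rcases (norm_nonneg y).eq_or_lt with hy | hy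
  · simp [← hy]
  have hCS : ⟪y, η⟫ ^ 2 ≤ ‖y‖ ^ 2 * ‖η‖ ^ 2 := by
    rw [← mul_pow, ← sq_abs]
    gcongr
    exact abs_real_inner_le_norm y η
  calc a * ‖η‖ ^ 2 + b / ‖y‖ * ⟪y, η⟫ * ⟪y, η⟫ = a * ‖η‖ ^ 2 + b / ‖y‖ * ⟪y, η⟫ ^ 2 := by ring
    _ ≤ a * ‖η‖ ^ 2 + b / ‖y‖ * (‖y‖ ^ 2 * ‖η‖ ^ 2) := by gcongr
    _ = (a + ‖y‖ * b) * ‖η‖ ^ 2 := by field_simp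

theorem differentiableAt_and_inner_fderiv_le_of_radial {φ : ℝ → ℝ}
    {χ : WithLp 2 (E × Z) → WithLp 2 (E × Z)}
    (hχ : ∀ (y : E) (z : Z), y ≠ 0 → χ (WithLp.toLp 2 (y, z)) = WithLp.toLp 2 (φ ‖y‖ • y, z))
    {y : E} (z : Z) (hy : y ≠ 0) {φ' : ℝ} (hφ : HasDerivAt φ φ' ‖y‖) (hφ' : 0 ≤ φ') :
    DifferentiableAt ℝ χ (WithLp.toLp 2 (y, z)) ∧
      ∀ ξ : WithLp 2 (E × Z),
        ⟪fderiv ℝ χ (WithLp.toLp 2 (y, z)) ξ, ξ⟫ ≤ max (φ ‖y‖ + ‖y‖ * φ') 1 * ‖ξ‖ ^ 2 := by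
  have hloc : χ =ᶠ[𝓝 (WithLp.toLp 2 (y, z))]
      fun x => WithLp.toLp 2 (φ ‖x.fst‖ • x.fst, x.snd) := by
    filter_upwards [(isOpen_ne.preimage (WithLp.continuous_fst 2 _ _)).mem_nhds hy] with x hx
    exact hχ x.fst x.snd hx
  have hχ' := ((hasFDerivAt_comp_norm_smul hy hφ).withLpProdMap (x := WithLp.toLp 2 (y, z))
    (hasFDerivAt_id z)).congr_of_eventuallyEq hloc
  refine ⟨hχ'.differentiableAt, fun ξ => ?_⟩
  rw [hχ'.fderiv]
  exact inner_withLpProdMap_self_le (inner_smul_id_add_rankOne_apply_self_le hφ' y)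
    (fun ζ => (real_inner_self_eq_norm_sq ζ).trans_le (one_mul _).ge) ξ

end InnerProductSpace

noncomputable def profile (k : ℕ) (τ t : ℝ) : ℝ := 1 / ((k : ℝ) + 1) * (1 - (τ / t) ^ (k + 1))

theorem hasDerivAt_profile (k : ℕ) (τ : ℝ) {r : ℝ} (hr : r ≠ 0) :
    HasDerivAt (profile k τ) ((τ / r) ^ (k + 1) / r) r := by
  have hquot : HasDerivAt (fun t => τ / t) (-τ / r ^ 2) r := by
    simpa [div_eq_mul_inv] using (hasDerivAt_inv hr).const_mul τ
  refine (((hquot.fun_pow (k + 1)).const_sub 1).const_mul (1 / ((k : ℝ) + 1))).congr_deriv ?_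
  rw [Nat.add_sub_cancel]
  push_cast
  field_simp
  rw [pow_succ, mul_left_comm, mul_div_cancel₀ _ hr, mul_comm]

theorem profile_add_pow (k : ℕ) (τ t : ℝ) :
    profile k τ t + (τ / t) ^ (k + 1) = 1 - k * profile k τ t := by
  unfold profile
  field_simp
  ring

theorem stmt_2_general (k N : ℕ) (τ : ℝ) (hτ : 0 < τ)
    (φ : ℝ → ℝ)
    (hφ : ∀ t : ℝ, 0 < t → φ t = (1 / ((k : ℝ) + 1)) * (1 - (τ / t) ^ (k + 1)))
    (χ : WithLp 2 (EuclideanSpace ℝ (Fin (k + 1)) × EuclideanSpace ℝ (Fin (N - k - 1))) →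
         WithLp 2 (EuclideanSpace ℝ (Fin (k + 1)) × EuclideanSpace ℝ (Fin (N - k - 1))))
    (hχ : ∀ (y : EuclideanSpace ℝ (Fin (k + 1))) (z : EuclideanSpace ℝ (Fin (N - k - 1))),
      y ≠ 0 →
      χ ((WithLp.equiv 2 _).symm (y, z)) = (WithLp.equiv 2 _).symm (φ ‖y‖ • y, z)) :
    ∀ (y : EuclideanSpace ℝ (Fin (k + 1))) (z : EuclideanSpace ℝ (Fin (N - k - 1))),
      y ≠ 0 →
      DifferentiableAt ℝ χ ((WithLp.equiv 2 _).symm (y, z)) ∧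
      ∀ ξ : WithLp 2 (EuclideanSpace ℝ (Fin (k + 1)) × EuclideanSpace ℝ (Fin (N - k - 1))),
        ⟪fderiv ℝ χ ((WithLp.equiv 2 _).symm (y, z)) ξ, ξ⟫ ≤
          max (1 - (k : ℝ) * φ ‖y‖) 1 * ‖ξ‖ ^ 2 := by
  intro y z hy
  have hr : 0 < ‖y‖ := norm_pos_iff.mpr hy
  have hderiv : HasDerivAt φ ((τ / ‖y‖) ^ (k + 1) / ‖y‖) ‖y‖ :=
    (hasDerivAt_profile k τ hr.ne').congr_of_eventuallyEq
      (Filter.eventually_of_mem (Ioi_mem_nhds hr) fun t ht => hφ t ht)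
  have hkey : φ ‖y‖ + ‖y‖ * ((τ / ‖y‖) ^ (k + 1) / ‖y‖) = 1 - k * φ ‖y‖ := by
    rw [mul_div_cancel₀ _ hr.ne', hφ _ hr]
    exact profile_add_pow k τ ‖y‖
  rw [← hkey]
  exact differentiableAt_and_inner_fderiv_le_of_radial hχ z hy hderiv (by positivity)

/-- With `χ_τ(y,z) = (φ(|y|)·y, z)` as above, viewed on the Euclidean space
`ℝ^N = ℝ^{k+1} × ℝ^{N−k−1}` (the `ℓ²`-product), for every `(y,z)` with `y ≠ 0` and every
`ξ ∈ ℝ^N` one has `⟨dχ_τ(y,z)[ξ], ξ⟩ ≤ max{1 − k·φ(|y|), 1}·|ξ|²`. -/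
theorem stmt_2 (k N : ℕ) (hk : k + 2 ≤ N) (τ : ℝ) (hτ : 0 < τ)
    (φ : ℝ → ℝ)
    (hφ : ∀ t : ℝ, 0 < t → φ t = (1 / ((k : ℝ) + 1)) * (1 - (τ / t) ^ (k + 1)))
    (χ : WithLp 2 (EuclideanSpace ℝ (Fin (k + 1)) × EuclideanSpace ℝ (Fin (N - k - 1))) →
         WithLp 2 (EuclideanSpace ℝ (Fin (k + 1)) × EuclideanSpace ℝ (Fin (N - k - 1))))
    (hχ : ∀ (y : EuclideanSpace ℝ (Fin (k + 1))) (z : EuclideanSpace ℝ (Fin (N - k - 1))),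
      y ≠ 0 →
      χ ((WithLp.equiv 2 _).symm (y, z)) = (WithLp.equiv 2 _).symm (φ ‖y‖ • y, z)) :
    ∀ (y : EuclideanSpace ℝ (Fin (k + 1))) (z : EuclideanSpace ℝ (Fin (N - k - 1))),
      y ≠ 0 →
      DifferentiableAt ℝ χ ((WithLp.equiv 2 _).symm (y, z)) ∧
      ∀ ξ : WithLp 2 (EuclideanSpace ℝ (Fin (k + 1)) × EuclideanSpace ℝ (Fin (N - k - 1))),
        ⟪fderiv ℝ χ ((WithLp.equiv 2 _).symm (y, z)) ξ, ξ⟫ ≤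
          max (1 - (k : ℝ) * φ ‖y‖) 1 * ‖ξ‖ ^ 2 :=
  stmt_2_general k N τ hτ φ hφ χ hχ
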